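/- Let (X, X̃) and (Y, Ỹ) be Cauchy pairs on an n-dimensional K-vector space V, and suppose some Cauchy matrix C ∈ Mat_n(K) is associated to both pairs (i.e. there is eigenvalue data for each pair that serves as data for C). Then there exists ζ ∈ K and a vector space isomorphism φ : V → V such that φX = (Y + ζI)φ and φX̃ = (Ỹ + ζI)φ. -/

import Mathlib

def IsCauchyPair (K V : Type*) [Field K] [AddCommGroup V] [Module K V]
    (X Xt : Module.End K V) : Prop :=
  (⨆ μ : K, X.eigenspace μ) = ⊤ ∧
  (⨆ μ : K, Xt.eigenspace μ) = ⊤ ∧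
  Module.rank K (LinearMap.range (X - Xt)) = 1 ∧
  ∀ W : Submodule K V, W.map (X : V →ₗ[K] V) ≤ W → W.map (Xt : V →ₗ[K] V) ≤ W →
    W = ⊥ ∨ W = ⊤

/-!
Write `R = X - X̃`, a map of rank one. Irreducibility rules out a nonzero `v` with
`X v = X̃ v = μ v`, so `R` is injective on every eigenspace of `X`: these are lines, `X` has an
eigenbasis, and it can be scaled so that `R bᵢ = ξ` for one fixed `ξ`, i.e. `X̃ bᵢ = xᵢ bᵢ - ξ`.
An eigenvector of `X̃` for `x̃ⱼ` then has coordinates proportional to `ξₖ / (xₖ - x̃ⱼ)`, and summing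
them shows that the coordinates of `ξ` solve the Cauchy system `∑ₖ ξₖ (xₖ - x̃ⱼ)⁻¹ = 1`. The Cauchy
matrix is invertible, so these coordinates depend only on the eigenvalue data. A common Cauchy
matrix forces `xᵢ - yᵢ = x̃ⱼ - ỹⱼ = ζ`, so the two normal forms agree up to the shift `ζ`, and the
change of basis between them is the required `φ`.
-/

open Module Submodule Matrix

open Lagrange Polynomial in
theorem Matrix.vecMul_of_inv_sub_injective {K ι κ : Type*} [Field K] [Fintype ι] [Fintype κ]
    {x : ι → K} {y : κ → K} (hx : Function.Injective x) (hy : Function.Injective y)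
    (hxy : ∀ i j, x i ≠ y j) (hcard : Fintype.card ι ≤ Fintype.card κ) :
    Function.Injective fun a : ι → K => a ᵥ* Matrix.of fun i j => (x i - y j)⁻¹ := by
  classical
  intro a a' haa'
  rw [← sub_eq_zero]
  set d := a - a'
  have hd : ∀ j, ∑ i, d i * (x i - y j)⁻¹ = 0 := fun j => by
    simpa [d, Matrix.vecMul, dotProduct, sub_mul, sub_eq_zero] using congrFun haa' j
  -- By the barycentric formula, `d` rescaled by the nodal weights is the value vector of an
  -- interpolant of degree `< card ι` that vanishes at every `y j`.
  set r : ι → K := fun i => (nodalWeight Finset.univ x i)⁻¹ * d i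
  have hw : ∀ i, nodalWeight Finset.univ x i ≠ 0 :=
    fun i => nodalWeight_ne_zero hx.injOn (Finset.mem_univ i)
  have hp : interpolate Finset.univ x r = 0 := by
    refine eq_zero_of_degree_lt_of_eval_index_eq_zero Finset.univ hy.injOn
      ((degree_interpolate_lt _ hx.injOn).trans_le (by exact_mod_cast hcard)) fun j _ => ?_
    rw [eval_interpolate_not_at_node _ fun i _ => (hxy i j).symm]
    convert mul_zero _ using 2
    rw [← neg_eq_zero, ← hd j, ← Finset.sum_neg_distrib]
    refine Finset.sum_congr rfl fun i _ => ?_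
    simp only [r, ← neg_sub (y j), inv_neg]
    field_simp
    rw [mul_div_mul_left _ _ (hw i)]
  funext i
  have := eval_interpolate_at_node r hx.injOn (Finset.mem_univ i)
  rw [hp, eval_zero] at this
  simpa [r, hw i] using this.symm

theorem Module.End.exists_basis_of_finrank_eigenspace_le_one {K V : Type*} [Field K]
    [AddCommGroup V] [Module K V] [FiniteDimensional K V] {Z : Module.End K V}
    (hdiag : ⨆ μ, Z.eigenspace μ = ⊤) (hle : ∀ μ, finrank K (Z.eigenspace μ) ≤ 1)
    {n : ℕ} {x : Fin n → K} (hinj : Function.Injective x) (heig : ∀ i, Z.HasEigenvalue (x i))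
    (hall : ∀ μ, Z.HasEigenvalue μ → ∃ i, x i = μ) :
    ∃ b : Basis (Fin n) K V, ∀ i, Z (b i) = x i • b i := by
  choose v hv using fun i => (heig i).exists_hasEigenvector
  have hspan : ⊤ ≤ span K (Set.range v) := by
    rw [← hdiag]
    refine iSup_le fun μ => ?_
    by_cases hμ : Z.HasEigenvalue μ
    · obtain ⟨i, rfl⟩ := hall μ hμ
      calc Z.eigenspace (x i) = K ∙ v i :=
            (eq_of_le_of_finrank_le ((span_singleton_le_iff_mem _ _).mpr (hv i).1)
              (by rw [finrank_span_singleton (hv i).2]; exact hle _)).symm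
        _ ≤ span K (Set.range v) := span_mono (Set.singleton_subset_iff.mpr ⟨i, rfl⟩)
    · rw [Module.End.hasEigenvalue_iff, not_not] at hμ
      exact hμ ▸ bot_le
  refine ⟨Basis.mk (Module.End.eigenvectors_linearIndependent' Z x hinj v hv) hspan, fun i => ?_⟩
  rw [Basis.mk_apply]
  exact (hv i).apply_eq_smul

theorem Module.Basis.repr_apply_of_apply_eq_smul {K V ι : Type*} [Field K] [AddCommGroup V]
    [Module K V] (b : Basis ι K V) {Z : Module.End K V} {x : ι → K}
    (hb : ∀ i, Z (b i) = x i • b i) (w : V) (i : ι) : b.repr (Z w) i = x i * b.repr w i := by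
  classical
  have : b.coord i ∘ₗ Z = x i • b.coord i := b.ext fun k => by
    by_cases h : k = i
    · simp [hb, h]
    · simp [hb, Ne.symm h]
  simpa using LinearMap.congr_fun this w

theorem Module.Basis.apply_eq_apply_sub_sum_repr_smul {K V ι : Type*} [Field K]
    [AddCommGroup V] [Module K V] [Fintype ι] (b : Basis ι K V) {X Xt : Module.End K V}
    {x : ι → K} {ξ : V} (hb : ∀ i, X (b i) = x i • b i) (hbt : ∀ i, Xt (b i) = x i • b i - ξ)
    (w : V) : Xt w = X w - (∑ i, b.repr w i) • ξ := by
  classical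
  have : Xt = X - (∑ i, b.coord i).smulRight ξ := b.ext fun k => by
    simp [hb, hbt, Finsupp.single_apply]
  simpa using LinearMap.congr_fun this w

theorem Module.Basis.sub_mul_repr_eq_of_apply_eq_smul {K V ι : Type*} [Field K]
    [AddCommGroup V] [Module K V] [Fintype ι] (b : Basis ι K V) {X Xt : Module.End K V}
    {x : ι → K} {ξ : V} (hb : ∀ i, X (b i) = x i • b i) (hbt : ∀ i, Xt (b i) = x i • b i - ξ)
    {μ : K} {u : V} (hu : Xt u = μ • u) (k : ι) :
    (x k - μ) * b.repr u k = (∑ i, b.repr u i) * b.repr ξ k := by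
  have := congrArg (b.repr · k) (b.apply_eq_apply_sub_sum_repr_smul hb hbt u)
  simp only [hu, map_sub, map_smul, Finsupp.sub_apply, Finsupp.smul_apply, smul_eq_mul,
    b.repr_apply_of_apply_eq_smul hb] at this
  linear_combination -this

namespace IsCauchyPair

variable {K V : Type*} [Field K] [AddCommGroup V] [Module K V] {X Xt : Module.End K V}

theorem eq_zero_of_apply_eq_smul (h : IsCauchyPair K V X Xt) {v : V} {μ : K}
    (hX : X v = μ • v) (hXt : Xt v = μ • v) : v = 0 := by
  obtain ⟨-, -, hrank, hirr⟩ := h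
  have hinv : ∀ Z : Module.End K V, Z v = μ • v → (K ∙ v).map Z ≤ K ∙ v := fun Z hZ => by
    rw [map_span, Set.image_singleton, span_le, Set.singleton_subset_iff, hZ]
    exact smul_mem _ _ (mem_span_singleton_self v)
  refine (hirr _ (hinv X hX) (hinv Xt hXt)).elim span_singleton_eq_bot.mp fun htop => ?_
  have : X - Xt = 0 := LinearMap.ext_on htop (by simp [Set.EqOn, hX, hXt])
  rw [this, LinearMap.range_zero, rank_bot] at hrank
  exact absurd hrank zero_ne_one

theorem finrank_eigenspace_le_one [FiniteDimensional K V] (h : IsCauchyPair K V X Xt) (μ : K) :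
    finrank K (X.eigenspace μ) ≤ 1 := by
  have hinj : Function.Injective ((X - Xt).domRestrict (X.eigenspace μ)) := by
    rw [← LinearMap.ker_eq_bot, eq_bot_iff]
    rintro ⟨w, hw⟩ hw0
    have hXw := Module.End.mem_eigenspace_iff.mp hw
    have hXtw : Xt w = μ • w := by
      rw [← hXw]; exact (sub_eq_zero.mp (by simpa using hw0)).symm
    simpa using h.eq_zero_of_apply_eq_smul hXw hXtw
  calc finrank K (X.eigenspace μ)
      = finrank K (LinearMap.range ((X - Xt).domRestrict (X.eigenspace μ))) :=
        (LinearMap.finrank_range_of_inj hinj).symm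
    _ ≤ finrank K (LinearMap.range (X - Xt)) :=
        Submodule.finrank_mono (LinearMap.range_domRestrict_le_range _ _)
    _ = 1 := rank_eq_one_iff_finrank_eq_one.mp h.2.2.1

theorem exists_basis [FiniteDimensional K V] (h : IsCauchyPair K V X Xt) {n : ℕ} {x : Fin n → K}
    (hinj : Function.Injective x) (heig : ∀ i, X.HasEigenvalue (x i))
    (hall : ∀ μ, X.HasEigenvalue μ → ∃ i, x i = μ) :
    ∃ (b : Basis (Fin n) K V) (ξ : V),
      (∀ i, X (b i) = x i • b i) ∧ ∀ i, Xt (b i) = x i • b i - ξ := by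
  obtain ⟨b, hb⟩ := Module.End.exists_basis_of_finrank_eigenspace_le_one h.1
    h.finrank_eigenspace_le_one hinj heig hall
  obtain ⟨⟨ξ, hξR⟩, -, hξ⟩ := rank_eq_one_iff.mp h.2.2.1
  choose c hc using fun i => hξ ⟨(X - Xt) (b i), LinearMap.mem_range_self _ _⟩
  have hXt : ∀ i, Xt (b i) = x i • b i - c i • ξ := fun i => by
    have : c i • ξ = X (b i) - Xt (b i) := congrArg Subtype.val (hc i)
    rw [← hb, this, sub_sub_cancel]
  have hc0 : ∀ i, c i ≠ 0 := fun i hci =>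
    b.ne_zero i (h.eq_zero_of_apply_eq_smul (hb i) (by rw [hXt, hci, zero_smul, sub_zero]))
  refine ⟨b.unitsSMul fun i => (Units.mk0 (c i) (hc0 i))⁻¹, ξ, fun i => ?_, fun i => ?_⟩
  · rw [Basis.unitsSMul_apply, Units.smul_def, map_smul, hb, smul_comm]
  · simp [Basis.unitsSMul_apply, Units.smul_def, hXt, smul_sub, smul_smul, hc0 i, mul_comm]

section Coordinates

variable {ι : Type*} [Fintype ι] {b : Basis ι K V} {x : ι → K} {ξ : V}

theorem repr_ne_zero (h : IsCauchyPair K V X Xt) (hb : ∀ i, X (b i) = x i • b i)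
    (hbt : ∀ i, Xt (b i) = x i • b i - ξ) (k : ι) : b.repr ξ k ≠ 0 := by
  -- Otherwise `ker (b.coord k)` is a common invariant subspace containing `ξ` but not `b k`.
  intro hk
  have hinv : ∀ Z : Module.End K V, (∀ w, b.coord k w = 0 → b.coord k (Z w) = 0) →
      (LinearMap.ker (b.coord k)).map Z ≤ LinearMap.ker (b.coord k) := by
    rintro Z hZ _ ⟨w, hw, rfl⟩
    exact hZ w hw
  have hX : ∀ w, b.coord k w = 0 → b.coord k (X w) = 0 := fun w hw => by
    simp_all [b.repr_apply_of_apply_eq_smul hb]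
  have hXt : ∀ w, b.coord k w = 0 → b.coord k (Xt w) = 0 := fun w hw => by
    simp_all [b.apply_eq_apply_sub_sum_repr_smul hb hbt w, b.repr_apply_of_apply_eq_smul hb]
  rcases h.2.2.2 _ (hinv X hX) (hinv Xt hXt) with hbot | htop
  · have hξ : ξ = 0 := by simpa [hbot] using (show ξ ∈ LinearMap.ker (b.coord k) from hk)
    exact b.ne_zero k (h.eq_zero_of_apply_eq_smul (hb k) (by rw [hbt, hξ, sub_zero]))
  · simpa using (htop ▸ mem_top : b k ∈ LinearMap.ker (b.coord k))

theorem sum_repr_ne_zero (h : IsCauchyPair K V X Xt) (hb : ∀ i, X (b i) = x i • b i)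
    (hbt : ∀ i, Xt (b i) = x i • b i - ξ) {μ : K} {u : V} (hu : Xt.HasEigenvector μ u) :
    ∑ i, b.repr u i ≠ 0 := by
  intro hs
  have hXu : X u = μ • u := by
    rw [← hu.apply_eq_smul, b.apply_eq_apply_sub_sum_repr_smul hb hbt, hs, zero_smul, sub_zero]
  exact hu.2 (h.eq_zero_of_apply_eq_smul hXu hu.apply_eq_smul)

theorem ne_of_hasEigenvalue (h : IsCauchyPair K V X Xt) (hb : ∀ i, X (b i) = x i • b i)
    (hbt : ∀ i, Xt (b i) = x i • b i - ξ) {μ : K} (hμ : Xt.HasEigenvalue μ) (k : ι) :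
    x k ≠ μ := by
  obtain ⟨u, hu⟩ := hμ.exists_hasEigenvector
  intro hk
  have := b.sub_mul_repr_eq_of_apply_eq_smul hb hbt hu.apply_eq_smul k
  rw [hk, sub_self, zero_mul, eq_comm, mul_eq_zero] at this
  exact this.elim (h.sum_repr_ne_zero hb hbt hu) (h.repr_ne_zero hb hbt k)

theorem sum_repr_mul_inv_sub_eq_one (h : IsCauchyPair K V X Xt)
    (hb : ∀ i, X (b i) = x i • b i) (hbt : ∀ i, Xt (b i) = x i • b i - ξ) {μ : K}
    (hμ : Xt.HasEigenvalue μ) : ∑ k, b.repr ξ k * (x k - μ)⁻¹ = 1 := by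
  obtain ⟨u, hu⟩ := hμ.exists_hasEigenvector
  refine mul_left_cancel₀ (h.sum_repr_ne_zero hb hbt hu) ?_
  rw [mul_one, Finset.mul_sum]
  refine Finset.sum_congr rfl fun k _ => ?_
  have hne := sub_ne_zero.mpr (h.ne_of_hasEigenvalue hb hbt hμ k)
  rw [← mul_assoc, ← b.sub_mul_repr_eq_of_apply_eq_smul hb hbt hu.apply_eq_smul k]
  field_simp

theorem vecMul_of_inv_sub_eq_one (h : IsCauchyPair K V X Xt) (hb : ∀ i, X (b i) = x i • b i)
    (hbt : ∀ i, Xt (b i) = x i • b i - ξ) {κ : Type*} {xt : κ → K}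
    (hxt : ∀ j, Xt.HasEigenvalue (xt j)) :
    ⇑(b.repr ξ) ᵥ* Matrix.of (fun i j => (x i - xt j)⁻¹) = 1 :=
  funext fun j => h.sum_repr_mul_inv_sub_eq_one hb hbt (hxt j)

end Coordinates

end IsCauchyPair

theorem Module.Basis.exists_linearEquiv_conj {K V W ι : Type*} [Field K] [AddCommGroup V]
    [Module K V] [AddCommGroup W] [Module K W] {X Xt : Module.End K V} {Y Yt : Module.End K W}
    {x y : ι → K} {ξ : V} {η : W} {ζ : K} (b : Basis ι K V) (b' : Basis ι K W)
    (hXb : ∀ i, X (b i) = x i • b i) (hXtb : ∀ i, Xt (b i) = x i • b i - ξ)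
    (hYb : ∀ i, Y (b' i) = y i • b' i) (hYtb : ∀ i, Yt (b' i) = y i • b' i - η)
    (hrepr : b.repr ξ = b'.repr η) (hxy : ∀ i, x i = y i + ζ) :
    ∃ φ : V ≃ₗ[K] W, ∀ v, φ (X v) = Y (φ v) + ζ • φ v ∧ φ (Xt v) = Yt (φ v) + ζ • φ v := by
  set φ : V ≃ₗ[K] W := b.repr.trans b'.repr.symm
  have hφb : ∀ i, φ (b i) = b' i := fun i => by simp [φ]
  have hφξ : φ ξ = η := by simp [φ, hrepr]
  have hconj : ∀ (Z : Module.End K V) (Z' : Module.End K W),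
      (∀ i, φ (Z (b i)) = Z' (b' i) + ζ • b' i) → ∀ v, φ (Z v) = Z' (φ v) + ζ • φ v := by
    intro Z Z' hZ v
    have : φ.toLinearMap ∘ₗ Z = (Z' + ζ • 1) ∘ₗ φ.toLinearMap := b.ext fun i => by simp [hZ, hφb]
    simpa using LinearMap.congr_fun this v
  refine ⟨φ, fun v => ⟨hconj X Y (fun i => ?_) v, hconj Xt Yt (fun i => ?_) v⟩⟩
  · rw [hXb, map_smul, hφb, hYb, hxy, add_smul]
  · rw [hXtb, map_sub, map_smul, hφb, hφξ, hYtb, hxy, add_smul]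
    abel

theorem stmt19_general {K V : Type*} [Field K] [AddCommGroup V] [Module K V] [FiniteDimensional K V]
    {n : ℕ} {X Xt Y Yt : Module.End K V}
    (hXX : IsCauchyPair K V X Xt) (hYY : IsCauchyPair K V Y Yt)
    (x xt y yt : Fin n → K)
    (hxinj : Function.Injective x)
    (hxeig : ∀ i, X.HasEigenvalue (x i))
    (hxall : ∀ μ : K, X.HasEigenvalue μ → ∃ i, x i = μ)
    (hxtinj : Function.Injective xt)
    (hxteig : ∀ i, Xt.HasEigenvalue (xt i))
    (hyinj : Function.Injective y)
    (hyeig : ∀ i, Y.HasEigenvalue (y i))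
    (hyall : ∀ μ : K, Y.HasEigenvalue μ → ∃ i, y i = μ)
    (hyteig : ∀ i, Yt.HasEigenvalue (yt i))
    (C : Matrix (Fin n) (Fin n) K)
    (hC1 : ∀ i j, C i j = (x i - xt j)⁻¹)
    (hC2 : ∀ i j, C i j = (y i - yt j)⁻¹) :
    ∃ ζ : K, ∃ φ : V ≃ₗ[K] V, ∀ v : V,
      φ (X v) = Y (φ v) + ζ • φ v ∧ φ (Xt v) = Yt (φ v) + ζ • φ v := by
  obtain ⟨b, ξ, hXb, hXtb⟩ := hXX.exists_basis hxinj hxeig hxall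
  obtain ⟨b', η, hYb, hYtb⟩ := hYY.exists_basis hyinj hyeig hyall
  have hrepr : b.repr ξ = b'.repr η := by
    refine DFunLike.coe_injective <| Matrix.vecMul_of_inv_sub_injective hxinj hxtinj
      (fun i j => hXX.ne_of_hasEigenvalue hXb hXtb (hxteig j) i) le_rfl ?_
    dsimp only
    rw [hXX.vecMul_of_inv_sub_eq_one hXb hXtb hxteig, ← Matrix.ext hC1, Matrix.ext hC2,
      hYY.vecMul_of_inv_sub_eq_one hYb hYtb hyteig]
  obtain ⟨ζ, hζ⟩ : ∃ ζ, ∀ i, x i = y i + ζ := by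
    rcases n with _ | n
    · exact ⟨0, fun i => i.elim0⟩
    · exact ⟨xt 0 - yt 0, fun i => by
        linear_combination inv_injective ((hC1 i 0).symm.trans (hC2 i 0))⟩
  exact ⟨ζ, b.exists_linearEquiv_conj b' hXb hXtb hYb hYtb hrepr hζ⟩

theorem stmt19 {K V : Type*} [Field K] [AddCommGroup V] [Module K V] [FiniteDimensional K V]
    {n : ℕ} {X Xt Y Yt : Module.End K V}
    (hXX : IsCauchyPair K V X Xt) (hYY : IsCauchyPair K V Y Yt)
    (x xt y yt : Fin n → K)
    (hxinj : Function.Injective x)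
    (hxeig : ∀ i, X.HasEigenvalue (x i))
    (hxall : ∀ μ : K, X.HasEigenvalue μ → ∃ i, x i = μ)
    (hxtinj : Function.Injective xt)
    (hxteig : ∀ i, Xt.HasEigenvalue (xt i))
    (hxtall : ∀ μ : K, Xt.HasEigenvalue μ → ∃ i, xt i = μ)
    (hyinj : Function.Injective y)
    (hyeig : ∀ i, Y.HasEigenvalue (y i))
    (hyall : ∀ μ : K, Y.HasEigenvalue μ → ∃ i, y i = μ)
    (hytinj : Function.Injective yt)
    (hyteig : ∀ i, Yt.HasEigenvalue (yt i))
    (hytall : ∀ μ : K, Yt.HasEigenvalue μ → ∃ i, yt i = μ)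
    (C : Matrix (Fin n) (Fin n) K)
    (hC1 : ∀ i j, C i j = (x i - xt j)⁻¹)
    (hC2 : ∀ i j, C i j = (y i - yt j)⁻¹) :
    ∃ ζ : K, ∃ φ : V ≃ₗ[K] V, ∀ v : V,
      φ (X v) = Y (φ v) + ζ • φ v ∧ φ (Xt v) = Yt (φ v) + ζ • φ v :=
  stmt19_general hXX hYY x xt y yt hxinj hxeig hxall hxtinj hxteig hyinj hyeig hyall hyteig C hC1
    hC2
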